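/- arXiv:2408.13411 — 2 statements merged into one kernel-verified Lean document; each statement's English description precedes it below -/
import Mathlib

section
/- Let a ∈ ℝ with |a| < 1, let (ε_t)_{t≥1} be independent real Gaussian random variables each with mean μ_ε and variance σ_ε² > 0, and define X_0 = 0 and X_t = a·X_{t−1} + ε_t for t ≥ 1. Then, as t → ∞, the law of X_t converges weakly (i.e., in distribution) to the Gaussian measure on ℝ with mean μ_ε/(1 − a) and variance σ_ε²/(1 − a²). -/
open MeasureTheory ProbabilityTheory Filter
open scoped NNReal BoundedContinuousFunction
open Real
open scoped ENNReal

lemma ar1_aux_pdf_conv (m1 m2 : ℝ) {v1 v2 : ℝ≥0} (h1 : v1 ≠ 0) (h2 : v2 ≠ 0) (z : ℝ) :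
    ∫ x, gaussianPDFReal m1 v1 x * gaussianPDFReal m2 v2 (z - x)
      = gaussianPDFReal (m1 + m2) (v1 + v2) z := by
  have hs1 : (0:ℝ) < v1 := by positivity
  have hs2 : (0:ℝ) < v2 := by positivity
  set s1 : ℝ := (v1 : ℝ)
  set s2 : ℝ := (v2 : ℝ)
  set A : ℝ := (s1 + s2) / (2 * s1 * s2) with hA
  have hApos : 0 < A := by positivity
  set x0 : ℝ := (s2 * m1 + s1 * (z - m2)) / (s1 + s2) with hx0
  set C : ℝ := -(z - m1 - m2) ^ 2 / (2 * (s1 + s2)) with hC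
  have key : ∀ x : ℝ, (-(x - m1) ^ 2 / (2 * s1)) + (-(z - x - m2) ^ 2 / (2 * s2))
      = -(A * (x - x0) ^ 2) + C := by
    intro x
    rw [hA, hx0, hC]
    field_simp
    ring
  have hint : ∀ x : ℝ, gaussianPDFReal m1 v1 x * gaussianPDFReal m2 v2 (z - x)
      = ((√(2 * π * s1))⁻¹ * (√(2 * π * s2))⁻¹ * rexp C) * rexp (-(A * (x - x0) ^ 2)) := by
    intro x
    simp only [gaussianPDFReal]
    rw [show ((√(2*π*s1))⁻¹ * rexp (-(x - m1)^2 / (2*s1))) * ((√(2*π*s2))⁻¹ * rexp (-(z - x - m2)^2 / (2*s2)))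
        = (√(2*π*s1))⁻¹ * (√(2*π*s2))⁻¹ * (rexp (-(x - m1)^2 / (2*s1)) * rexp (-(z - x - m2)^2 / (2*s2))) by ring,
      ← Real.exp_add, key x, Real.exp_add]
    ring
  rw [integral_congr_ae (Filter.Eventually.of_forall hint), integral_const_mul]
  have hgauss : ∫ x : ℝ, rexp (-(A * (x - x0) ^ 2)) = √(π / A) := by
    have := integral_sub_right_eq_self (μ := volume) (fun x : ℝ => rexp (-(A * x ^ 2))) x0
    rw [this]
    simp_rw [neg_mul_eq_neg_mul]
    exact integral_gaussian A
  rw [hgauss]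
  -- now the constants
  have hconst : (√(2 * π * s1))⁻¹ * (√(2 * π * s2))⁻¹ * √(π / A)
      = (√(2 * π * (s1 + s2)))⁻¹ := by
    rw [← Real.sqrt_inv, ← Real.sqrt_inv, ← Real.sqrt_mul (by positivity),
      ← Real.sqrt_mul (by positivity), ← Real.sqrt_inv]
    congr 1
    rw [hA]
    field_simp
  have : gaussianPDFReal (m1 + m2) (v1 + v2) z
      = (√(2 * π * (s1 + s2)))⁻¹ * rexp C := by
    simp only [gaussianPDFReal, NNReal.coe_add, hC]
    ring_nf
    rfl
  rw [this, ← hconst]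
  ring

lemma ar1_aux_lintegral_conv (m1 m2 : ℝ) {v1 v2 : ℝ≥0} (h1 : v1 ≠ 0) (h2 : v2 ≠ 0) (z : ℝ) :
    ∫⁻ x, gaussianPDF m1 v1 x * gaussianPDF m2 v2 (z - x)
      = gaussianPDF (m1 + m2) (v1 + v2) z := by
  have hbound : ∀ x : ℝ, gaussianPDFReal m1 v1 x * gaussianPDFReal m2 v2 (z - x)
      ≤ (√(2 * π * v2))⁻¹ * gaussianPDFReal m1 v1 x := by
    intro x
    rw [mul_comm ((√(2 * π * v2))⁻¹)]
    refine mul_le_mul_of_nonneg_left ?_ (gaussianPDFReal_nonneg _ _ _)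
    unfold gaussianPDFReal
    have : rexp (-(z - x - m2) ^ 2 / (2 * v2)) ≤ 1 :=
      Real.exp_le_one_iff.2 (div_nonpos_of_nonpos_of_nonneg (neg_nonpos.2 (sq_nonneg _)) (by positivity))
    calc (√(2 * π * v2))⁻¹ * rexp (-(z - x - m2) ^ 2 / (2 * v2))
        ≤ (√(2 * π * v2))⁻¹ * 1 := by gcongr
      _ = (√(2 * π * v2))⁻¹ := mul_one _
  have hint : Integrable (fun x => gaussianPDFReal m1 v1 x * gaussianPDFReal m2 v2 (z - x)) := by
    refine Integrable.mono ((integrable_gaussianPDFReal m1 v1).const_mul ((√(2 * π * v2))⁻¹))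
      ((measurable_gaussianPDFReal m1 v1).mul
        ((measurable_gaussianPDFReal m2 v2).comp (measurable_const_sub z))).aestronglyMeasurable
      (Filter.Eventually.of_forall fun x => ?_)
    rw [Real.norm_eq_abs, Real.norm_eq_abs,
      abs_of_nonneg (mul_nonneg (gaussianPDFReal_nonneg _ _ _) (gaussianPDFReal_nonneg _ _ _)),
      abs_of_nonneg (mul_nonneg (by positivity) (gaussianPDFReal_nonneg _ _ _))]
    exact hbound x
  simp only [gaussianPDF]
  have : ∀ x : ℝ, ENNReal.ofReal (gaussianPDFReal m1 v1 x)
        * ENNReal.ofReal (gaussianPDFReal m2 v2 (z - x))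
      = ENNReal.ofReal (gaussianPDFReal m1 v1 x * gaussianPDFReal m2 v2 (z - x)) := fun x =>
    (ENNReal.ofReal_mul (gaussianPDFReal_nonneg _ _ _)).symm
  simp_rw [this]
  rw [← ofReal_integral_eq_lintegral_ofReal hint (Filter.Eventually.of_forall fun x =>
    mul_nonneg (gaussianPDFReal_nonneg _ _ _) (gaussianPDFReal_nonneg _ _ _)),
    ar1_aux_pdf_conv m1 m2 h1 h2 z]

lemma ar1_aux_gaussian_add {Ω : Type*} [MeasurableSpace Ω] (μ : Measure Ω)
    [IsProbabilityMeasure μ] {Y Z : Ω → ℝ} (hYm : Measurable Y) (hZm : Measurable Z)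
    (h : IndepFun Y Z μ) {m1 m2 : ℝ} {v1 v2 : ℝ≥0} (hv2 : v2 ≠ 0)
    (hY : Measure.map Y μ = gaussianReal m1 v1) (hZ : Measure.map Z μ = gaussianReal m2 v2) :
    Measure.map (fun ω => Y ω + Z ω) μ = gaussianReal (m1 + m2) (v1 + v2) := by
  by_cases hv1 : v1 = 0
  · -- Y = m1 a.e.
    subst hv1
    rw [gaussianReal_zero_var] at hY
    have hae : Y =ᵐ[μ] fun _ => m1 := by
      have : μ (Y ⁻¹' {m1}ᶜ) = 0 := by
        rw [← Measure.map_apply hYm (MeasurableSet.singleton m1).compl, hY,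
          Measure.dirac_apply' _ (MeasurableSet.singleton m1).compl]
        simp [add_comm]
      filter_upwards [measure_eq_zero_iff_ae_notMem.1 this] with ω hω
      simpa [Set.mem_preimage] using hω
    have : (fun ω => Y ω + Z ω) =ᵐ[μ] fun ω => m1 + Z ω := by
      filter_upwards [hae] with ω hω; rw [hω]
    rw [Measure.map_congr this, show (fun ω => m1 + Z ω) = (fun x => m1 + x) ∘ Z from rfl,
      ← Measure.map_map (measurable_const_add m1) hZm, hZ, gaussianReal_map_const_add]
    rw [add_comm m2 m1]
    simp
  · -- main case
    have hprod : μ.map (fun ω => (Y ω, Z ω)) = (μ.map Y).prod (μ.map Z) :=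
      (indepFun_iff_map_prod_eq_prod_map_map hYm.aemeasurable hZm.aemeasurable).1 h
    have hmm : Measure.map (fun ω => Y ω + Z ω) μ
        = Measure.map (fun p : ℝ × ℝ => p.1 + p.2) ((gaussianReal m1 v1).prod (gaussianReal m2 v2)) := by
      rw [← hY, ← hZ, ← hprod, Measure.map_map measurable_add (hYm.prodMk hZm)]
      rfl
    rw [hmm, gaussianReal_of_var_ne_zero _ hv1, gaussianReal_of_var_ne_zero _ hv2,
      gaussianReal_of_var_ne_zero _ (by simp [hv1, hv2] : v1 + v2 ≠ 0)]
    refine Measure.ext fun s hs => ?_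
    rw [Measure.map_apply measurable_add hs, withDensity_apply _ hs]
    rw [Measure.prod_apply (measurable_add hs)]
    have hinner : ∀ x : ℝ, (volume.withDensity (gaussianPDF m2 v2))
          (Prod.mk x ⁻¹' ((fun p : ℝ × ℝ => p.1 + p.2) ⁻¹' s))
        = ∫⁻ z, s.indicator (fun _ => (1:ℝ≥0∞)) z * gaussianPDF m2 v2 (z - x) := by
      intro x
      have hpre : Prod.mk x ⁻¹' ((fun p : ℝ × ℝ => p.1 + p.2) ⁻¹' s)
          = (fun y => x + y) ⁻¹' s := rfl
      rw [hpre, withDensity_apply _ ((measurable_const_add x) hs),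
        ← lintegral_indicator ((measurable_const_add x) hs) _]
      have : ∀ y : ℝ, ((fun y => x + y) ⁻¹' s).indicator (gaussianPDF m2 v2) y
          = (fun z => s.indicator (fun _ => (1:ℝ≥0∞)) z * gaussianPDF m2 v2 (z - x)) (x + y) := by
        intro y
        by_cases hxy : x + y ∈ s <;>
          simp [Set.indicator_apply, hxy, Set.mem_preimage, add_sub_cancel_left]
      rw [lintegral_congr this,
        lintegral_add_left_eq_self (fun z => s.indicator (fun _ => (1:ℝ≥0∞)) z * gaussianPDF m2 v2 (z - x)) x]
    rw [lintegral_congr hinner]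
    have hmeas2 : Measurable (Function.uncurry fun x z =>
        s.indicator (fun _ => (1:ℝ≥0∞)) z * gaussianPDF m2 v2 (z - x)) := by
      show Measurable fun p : ℝ × ℝ => s.indicator (fun _ => (1:ℝ≥0∞)) p.2
        * gaussianPDF m2 v2 (p.2 - p.1)
      exact (((measurable_indicator_const_iff 1).2 hs).comp measurable_snd).mul
        ((measurable_gaussianPDF m2 v2).comp (measurable_snd.sub measurable_fst))
    have hg : Measurable fun x : ℝ => ∫⁻ z, s.indicator (fun _ => (1:ℝ≥0∞)) z
        * gaussianPDF m2 v2 (z - x) := Measurable.lintegral_prod_right' hmeas2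
    rw [lintegral_withDensity_eq_lintegral_mul _ (measurable_gaussianPDF m1 v1) hg]
    have hswap : ∫⁻ x, (gaussianPDF m1 v1 * fun x => ∫⁻ z,
          s.indicator (fun _ => (1:ℝ≥0∞)) z * gaussianPDF m2 v2 (z - x)) x
        = ∫⁻ z, s.indicator (fun _ => (1:ℝ≥0∞)) z
            * ∫⁻ x, gaussianPDF m1 v1 x * gaussianPDF m2 v2 (z - x) := by
      have h1 : ∀ x : ℝ, (gaussianPDF m1 v1 * fun x => ∫⁻ z,
            s.indicator (fun _ => (1:ℝ≥0∞)) z * gaussianPDF m2 v2 (z - x)) x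
          = ∫⁻ z, gaussianPDF m1 v1 x
              * (s.indicator (fun _ => (1:ℝ≥0∞)) z * gaussianPDF m2 v2 (z - x)) := by
        intro x
        simp only [Pi.mul_apply]
        have hF : Measurable fun z : ℝ => s.indicator (fun _ => (1:ℝ≥0∞)) z
            * gaussianPDF m2 v2 (z - x) := by
          exact ((measurable_indicator_const_iff 1).2 hs).mul
            ((measurable_gaussianPDF m2 v2).comp (measurable_sub_const x))
        exact (lintegral_const_mul (gaussianPDF m1 v1 x) hF).symm
      rw [lintegral_congr h1]
      have hunc : AEMeasurable (Function.uncurry fun x z => gaussianPDF m1 v1 x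
          * (s.indicator (fun _ => (1:ℝ≥0∞)) z * gaussianPDF m2 v2 (z - x)))
          ((volume : Measure ℝ).prod volume) := by
        apply Measurable.aemeasurable
        show Measurable fun p : ℝ × ℝ => gaussianPDF m1 v1 p.1
          * (s.indicator (fun _ => (1:ℝ≥0∞)) p.2 * gaussianPDF m2 v2 (p.2 - p.1))
        exact ((measurable_gaussianPDF m1 v1).comp measurable_fst).mul
          ((((measurable_indicator_const_iff 1).2 hs).comp measurable_snd).mul
            ((measurable_gaussianPDF m2 v2).comp (measurable_snd.sub measurable_fst)))
      rw [lintegral_lintegral_swap hunc]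
      refine lintegral_congr fun z => ?_
      have hF2 : Measurable fun x : ℝ => gaussianPDF m1 v1 x * gaussianPDF m2 v2 (z - x) := by
        exact (measurable_gaussianPDF m1 v1).mul
          ((measurable_gaussianPDF m2 v2).comp (measurable_const_sub z))
      rw [← lintegral_const_mul (s.indicator (fun _ => (1:ℝ≥0∞)) z) hF2]
      exact lintegral_congr fun x => by ring
    rw [hswap]
    have : ∀ z : ℝ, s.indicator (fun _ => (1:ℝ≥0∞)) z
          * ∫⁻ x, gaussianPDF m1 v1 x * gaussianPDF m2 v2 (z - x)
        = s.indicator (gaussianPDF (m1 + m2) (v1 + v2)) z := by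
      intro z
      rw [ar1_aux_lintegral_conv m1 m2 hv1 hv2 z]
      by_cases hz : z ∈ s <;> simp [Set.indicator_apply, hz]
    rw [lintegral_congr this, lintegral_indicator hs _]

lemma ar1_aux_iIndepFun_congr {Ω : Type*} [MeasurableSpace Ω] {μ : Measure Ω}
    [IsProbabilityMeasure μ] {f g : ℕ → Ω → ℝ}
    (h : iIndepFun f μ) (hfg : ∀ i, f i =ᵐ[μ] g i) :
    iIndepFun g μ := by
  rw [iIndepFun_iff_measure_inter_preimage_eq_mul] at h ⊢
  intro S sets hsets
  have hae : ∀ᵐ ω ∂μ, ∀ i ∈ S, f i ω = g i ω :=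
    (ae_ball_iff S.countable_toSet).2 fun i _ => hfg i
  have h1 : (⋂ i ∈ S, g i ⁻¹' sets i) =ᵐ[μ] (⋂ i ∈ S, f i ⁻¹' sets i) := by
    rw [Filter.eventuallyEq_set]
    filter_upwards [hae] with ω hω
    simp only [Set.mem_iInter, Set.mem_preimage]
    exact ⟨fun hmem i hi => (hω i hi) ▸ hmem i hi, fun hmem i hi => (hω i hi) ▸ hmem i hi⟩
  rw [measure_congr h1, h S hsets]
  refine Finset.prod_congr rfl fun i _ => measure_congr ?_
  rw [Filter.eventuallyEq_set]
  filter_upwards [hfg i] with ω hω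
  simp [Set.mem_preimage, hω]

lemma ar1_aux_gaussian_eq_map (m : ℝ) (w : ℝ≥0) :
    gaussianReal m w = Measure.map (fun x => m + Real.sqrt w * x) (gaussianReal 0 1) := by
  have h1 : (gaussianReal 0 1).map (fun x : ℝ => Real.sqrt w * x) = gaussianReal 0 w := by
    have := gaussianReal_map_const_mul (μ := 0) (v := 1) (Real.sqrt w)
    simp only [mul_zero, mul_one] at this
    rw [show (fun x : ℝ => Real.sqrt w * x) = (Real.sqrt w * ·) from rfl, this]
    congr 1
    ext
    simp [Real.sq_sqrt w.2]
  have h2 : (gaussianReal 0 w).map (fun x : ℝ => m + x) = gaussianReal m w := by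
    have := gaussianReal_map_const_add (μ := 0) (v := w) m
    simpa using this
  rw [← h2, ← h1, Measure.map_map (measurable_const_add m) (measurable_const_mul _)]
  rfl

lemma ar1_aux_integral_gaussian (f : ℝ →ᵇ ℝ) (m : ℝ) (w : ℝ≥0) :
    ∫ x, f x ∂(gaussianReal m w) = ∫ x, f (m + Real.sqrt w * x) ∂(gaussianReal 0 1) := by
  rw [ar1_aux_gaussian_eq_map m w,
    integral_map (by fun_prop) f.continuous.aestronglyMeasurable]

/-- Convergence in distribution of the AR(1) process `X_t = a X_{t-1} + ε_t`, `X_0 = 0`,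
`|a| < 1`, with independent Gaussian innovations `ε_t ∼ N(με, v)`, `v > 0`: the law of
`X_t` converges weakly to `N(με/(1-a), v/(1-a²))`, i.e. integrals of every bounded
continuous function converge. -/
theorem ar1_convergence_in_distribution {Ω : Type*} [MeasurableSpace Ω]
    (μ : Measure Ω) [IsProbabilityMeasure μ]
    (a : ℝ) (ha : |a| < 1) (με : ℝ) (v : ℝ≥0) (hv : 0 < v)
    (ε : ℕ → Ω → ℝ)
    (hindep : iIndepFun (fun t : ℕ => ε (t + 1)) μ)
    (hlaw : ∀ t : ℕ, 1 ≤ t → Measure.map (ε t) μ = gaussianReal με v)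
    (X : ℕ → Ω → ℝ) (hX0 : X 0 = fun _ => 0)
    (hX : ∀ t : ℕ, X (t + 1) = fun ω => a * X t ω + ε (t + 1) ω) :
    ∀ f : ℝ →ᵇ ℝ,
      Tendsto (fun t : ℕ => ∫ x, f x ∂(Measure.map (X t) μ)) atTop
        (nhds (∫ x, f x
          ∂(gaussianReal (με / (1 - a)) (Real.toNNReal ((v : ℝ) / (1 - a ^ 2)))))) := by
  intro f
  have ha1 : -1 < a ∧ a < 1 := abs_lt.1 ha
  have h1a : (0:ℝ) < 1 - a := by linarith [ha1.1, ha1.2]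
  have h1a2 : (0:ℝ) < 1 - a ^ 2 := by nlinarith [ha1.1, ha1.2]
  have ha2abs : |a ^ 2| < 1 := by
    rw [abs_of_nonneg (sq_nonneg a)]; linarith
  -- measurable modifications of the innovations
  have hεae : ∀ i : ℕ, AEMeasurable (ε (i + 1)) μ := fun i =>
    aemeasurable_of_map_neZero (by rw [hlaw (i + 1) (by omega)]; infer_instance)
  set η : ℕ → Ω → ℝ := fun i => (hεae i).mk _ with hηdef
  have hηm : ∀ i, Measurable (η i) := fun i => (hεae i).measurable_mk
  have hηae : ∀ i, ε (i + 1) =ᵐ[μ] η i := fun i => (hεae i).ae_eq_mk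
  have hηindep : iIndepFun η μ :=
    ar1_aux_iIndepFun_congr hindep hηae
  have hηlaw : ∀ i, Measure.map (η i) μ = gaussianReal με v := fun i => by
    rw [← Measure.map_congr (hηae i), hlaw (i + 1) (by omega)]
  -- explicit representation
  set Y : ℕ → Ω → ℝ := fun t ω => ∑ i ∈ Finset.range t, a ^ (t - 1 - i) * η i ω with hYdef
  have hYm : ∀ t, Measurable (Y t) := fun t =>
    Finset.measurable_sum _ fun i _ => (hηm i).const_mul _
  have hYrec : ∀ t, Y (t + 1) = fun ω => a * Y t ω + η t ω := by
    intro t; funext ω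
    simp only [hYdef]
    rw [Finset.sum_range_succ]
    have h0 : t + 1 - 1 - t = 0 := by omega
    rw [h0, pow_zero, one_mul, Finset.mul_sum]
    congr 1
    refine Finset.sum_congr rfl fun i hi => ?_
    have hi' : i < t := Finset.mem_range.1 hi
    have he : t + 1 - 1 - i = (t - 1 - i) + 1 := by omega
    rw [he, pow_succ]
    ring
  have hXY : ∀ t, X t =ᵐ[μ] Y t := by
    intro t
    induction t with
    | zero => rw [hX0]; filter_upwards with ω; simp [hYdef]
    | succ t ih =>
      rw [hX t, hYrec t]
      filter_upwards [ih, hηae t] with ω h1 h2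
      simp only [h1, h2]
  -- independence of Y t and η t
  have hindYη : ∀ t, IndepFun (Y t) (η t) μ := by
    intro t
    have hG : iIndepFun
        (fun i => (fun x => a ^ (t - 1 - i) * x) ∘ η i) μ :=
      hηindep.comp _ (fun i => measurable_const_mul _)
    have hGm : ∀ i, Measurable ((fun x => a ^ (t - 1 - i) * x) ∘ η i) := fun i =>
      (measurable_const_mul _).comp (hηm i)
    have h := hG.indepFun_finsetSum_of_notMem hGm (Finset.notMem_range_self (n := t))
    have e1 : (∑ j ∈ Finset.range t, ((fun x => a ^ (t - 1 - j) * x) ∘ η j)) = Y t := by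
      funext ω
      rw [Finset.sum_apply]
      rfl
    have e2 : ((fun x => a ^ (t - 1 - t) * x) ∘ η t) = η t := by
      funext ω
      simp [show t - 1 - t = 0 from by omega]
    rw [e1, e2] at h
    exact h
  -- geometric sums
  set a2 : ℝ≥0 := ⟨a ^ 2, sq_nonneg a⟩ with ha2def
  set c : ℕ → ℝ := fun n => ∑ j ∈ Finset.range n, a ^ j with hcdef
  set W : ℕ → ℝ≥0 := fun n => ∑ j ∈ Finset.range n, a2 ^ j with hWdef
  -- law of Y (t+1)
  have hlawY : ∀ t, Measure.map (Y (t + 1)) μ = gaussianReal (με * c (t + 1)) (W (t + 1) * v) := by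
    intro t
    induction t with
    | zero =>
      have hY1 : Y 1 = η 0 := by funext ω; simp [hYdef]
      rw [hY1, hηlaw 0]
      have hc1 : c 1 = 1 := by simp [hcdef]
      have hW1 : W 1 = 1 := by simp [hWdef]
      rw [hc1, hW1, mul_one, one_mul]
    | succ t ih =>
      rw [hYrec (t + 1)]
      have hmap : Measure.map (fun ω => a * Y (t + 1) ω) μ
          = gaussianReal (a * (με * c (t + 1))) (a2 * (W (t + 1) * v)) := by
        rw [show (fun ω => a * Y (t + 1) ω) = (a * ·) ∘ (Y (t + 1)) from rfl,
          ← Measure.map_map (measurable_const_mul a) (hYm (t + 1)), ih,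
          gaussianReal_map_const_mul]
        rfl
      have hind : IndepFun (fun ω => a * Y (t + 1) ω) (η (t + 1)) μ :=
        (hindYη (t + 1)).comp (measurable_const_mul a) measurable_id
      have hsum := ar1_aux_gaussian_add μ ((hYm (t + 1)).const_mul a) (hηm (t + 1)) hind
        hv.ne' hmap (hηlaw (t + 1))
      rw [hsum]
      have hcrec : c (t + 2) = a * c (t + 1) + 1 := by simp only [hcdef]; exact geom_sum_succ
      have hWrec : W (t + 2) = a2 * W (t + 1) + 1 := by simp only [hWdef]; exact geom_sum_succ
      congr 1
      · rw [hcrec]; ring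
      · rw [hWrec]; ring
  -- parameter limits
  have hc_lim : Tendsto c atTop (nhds (1 - a)⁻¹) :=
    (hasSum_geometric_of_abs_lt_one ha).tendsto_sum_nat
  have hW_lim : Tendsto (fun n => ((W n : ℝ))) atTop (nhds (1 - a ^ 2)⁻¹) := by
    have : ∀ n, ((W n : ℝ)) = ∑ j ∈ Finset.range n, (a ^ 2) ^ j := by
      intro n
      simp only [hWdef]
      push_cast
      rfl
    simp_rw [this]
    exact (hasSum_geometric_of_abs_lt_one ha2abs).tendsto_sum_nat
  -- the limit integral
  have hwinf : (0:ℝ) ≤ (v : ℝ) / (1 - a ^ 2) := by positivity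
  have hL : ∫ x, f x ∂(gaussianReal (με / (1 - a)) (Real.toNNReal ((v : ℝ) / (1 - a ^ 2))))
      = ∫ x, f (με / (1 - a) + Real.sqrt ((v : ℝ) / (1 - a ^ 2)) * x) ∂(gaussianReal 0 1) := by
    rw [ar1_aux_integral_gaussian, Real.coe_toNNReal _ hwinf]
  rw [hL]
  have hmain : Tendsto (fun t : ℕ => ∫ x, f (με * c t + Real.sqrt ((W t * v : ℝ≥0)) * x)
      ∂(gaussianReal 0 1)) atTop
      (nhds (∫ x, f (με / (1 - a) + Real.sqrt ((v : ℝ) / (1 - a ^ 2)) * x)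
        ∂(gaussianReal 0 1))) := by
    refine tendsto_integral_of_dominated_convergence (fun _ => ‖f‖)
      (fun t => (f.continuous.comp (by fun_prop)).aestronglyMeasurable) ?_ ?_ ?_
    · exact integrable_const _
    · exact fun t => Filter.Eventually.of_forall fun x => f.norm_coe_le_norm _
    · refine Filter.Eventually.of_forall fun x => ?_
      have hm : Tendsto (fun t => με * c t) atTop (nhds (με / (1 - a))) := by
        rw [div_eq_mul_inv]
        exact hc_lim.const_mul με
      have hsq : Tendsto (fun t => Real.sqrt ((W t * v : ℝ≥0))) atTop
          (nhds (Real.sqrt ((v : ℝ) / (1 - a ^ 2)))) := by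
        have h1 : ∀ t, ((W t * v : ℝ≥0) : ℝ) = (W t : ℝ) * (v : ℝ) := by
          intro t; push_cast; ring
        simp_rw [h1]
        have h2 : Tendsto (fun t => (W t : ℝ) * (v : ℝ)) atTop
            (nhds ((1 - a ^ 2)⁻¹ * (v : ℝ))) := hW_lim.mul_const _
        have h3 : (v : ℝ) / (1 - a ^ 2) = (1 - a ^ 2)⁻¹ * (v : ℝ) := by
          rw [div_eq_mul_inv]; ring
        rw [h3]
        exact (Real.continuous_sqrt.tendsto _).comp h2
      exact (f.continuous.tendsto _).comp (hm.add (hsq.mul_const x))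
  refine Tendsto.congr' ?_ hmain
  filter_upwards [eventually_ge_atTop 1] with t ht
  obtain ⟨s, rfl⟩ := Nat.exists_eq_add_of_le ht
  rw [show 1 + s = s + 1 from by omega, Measure.map_congr (hXY (s + 1)), hlawY s,
    ar1_aux_integral_gaussian]
end

section
/- Let (E, ℰ) be a measurable space, π a probability measure on E, and κ a Markov kernel on E that is reversible with respect to π, i.e., ∫_A κ(x, B) dπ(x) = ∫_B κ(x, A) dπ(x) for all measurable sets A, B (detailed balance). Let g : E → ℝ be a bounded measurable function with ∫ g dπ = 0, and define the Markov operator (P h)(x) = ∫ h(y) κ(x, dy) and the autocovariances γ_t = ∫ g(x) · (P^t g)(x) dπ(x) for t ≥ 0 (with P^0 g = g). Then the sums of adjacent pairs Γ_m = γ_{2m} + γ_{2m+1}, m ≥ 0, form a nonnegative, nonincreasing, convex sequence: Γ_m ≥ 0, Γ_{m+1} ≤ Γ_m, and Γ_m + Γ_{m+2} ≥ 2·Γ_{m+1} for all m ≥ 0. -/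
open MeasureTheory ProbabilityTheory

/-- The Markov operator of a kernel: `(P h)(x) = ∫ h(y) κ(x, dy)`. -/
noncomputable def markovOp {E : Type*} [MeasurableSpace E]
    (κ : ProbabilityTheory.Kernel E E) (h : E → ℝ) : E → ℝ :=
  fun x => ∫ y, h y ∂(κ x)

namespace GeyerAux

/-- Bounded measurable real functions. -/
structure BM {α : Type*} [MeasurableSpace α] (u : α → ℝ) : Prop where
  meas : Measurable u
  bdd : ∃ C : ℝ, ∀ x, |u x| ≤ C

variable {α : Type*} [MeasurableSpace α]

lemma BM.integrable {u : α → ℝ} (hu : BM u) (μ : Measure α) [IsFiniteMeasure μ] :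
    Integrable u μ := by
  obtain ⟨C, hC⟩ := hu.bdd
  exact ⟨hu.meas.aestronglyMeasurable,
    HasFiniteIntegral.of_bounded (ae_of_all μ fun x => by simpa using hC x)⟩

lemma BM.add {u v : α → ℝ} (hu : BM u) (hv : BM v) : BM (fun x => u x + v x) := by
  obtain ⟨Cu, hCu⟩ := hu.bdd
  obtain ⟨Cv, hCv⟩ := hv.bdd
  exact ⟨hu.meas.add hv.meas, ⟨Cu + Cv, fun x =>
    (abs_add_le _ _).trans (add_le_add (hCu x) (hCv x))⟩⟩

lemma BM.sub {u v : α → ℝ} (hu : BM u) (hv : BM v) : BM (fun x => u x - v x) := by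
  obtain ⟨Cu, hCu⟩ := hu.bdd
  obtain ⟨Cv, hCv⟩ := hv.bdd
  exact ⟨hu.meas.sub hv.meas, ⟨Cu + Cv, fun x =>
    (abs_sub _ _).trans (add_le_add (hCu x) (hCv x))⟩⟩

lemma BM.mul {u v : α → ℝ} (hu : BM u) (hv : BM v) : BM (fun x => u x * v x) := by
  obtain ⟨Cu, hCu⟩ := hu.bdd
  obtain ⟨Cv, hCv⟩ := hv.bdd
  refine ⟨hu.meas.mul hv.meas, ⟨Cu * Cv, fun x => ?_⟩⟩
  rw [abs_mul]
  exact mul_le_mul (hCu x) (hCv x) (abs_nonneg _) ((abs_nonneg _).trans (hCu x))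

lemma BM.comp {β : Type*} [MeasurableSpace β] {u : α → ℝ} (hu : BM u)
    {φ : β → α} (hφ : Measurable φ) : BM (fun x => u (φ x)) := by
  obtain ⟨C, hC⟩ := hu.bdd
  exact ⟨hu.meas.comp hφ, ⟨C, fun x => hC _⟩⟩

variable {E : Type*} [MeasurableSpace E]
  {π : Measure E} [IsProbabilityMeasure π]
  {κ : ProbabilityTheory.Kernel E E} [IsMarkovKernel κ]

lemma BM.markov {u : E → ℝ} (hu : BM u) : BM (markovOp κ u) := by
  obtain ⟨C, hC⟩ := hu.bdd
  constructor
  · have : StronglyMeasurable fun (p : E × E) => u p.2 :=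
      (hu.meas.comp measurable_snd).stronglyMeasurable
    exact this.integral_kernel_prod_right'.measurable
  · refine ⟨C, fun x => ?_⟩
    have h := norm_integral_le_of_norm_le_const (μ := κ x) (f := u) (C := C)
      (ae_of_all _ fun y => by rw [Real.norm_eq_abs]; exact hC y)
    rw [Real.norm_eq_abs] at h
    simpa [markovOp] using h

lemma BM.iterMarkovOp {u : E → ℝ} (hu : BM u) (n : ℕ) : BM ((markovOp κ)^[n] u) := by
  induction n with
  | zero => simpa using hu
  | succ n ih => rw [Function.iterate_succ_apply']; exact ih.markov

lemma markovOp_add {u v : E → ℝ} (hu : BM u) (hv : BM v) :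
    markovOp κ (fun x => u x + v x) = fun x => markovOp κ u x + markovOp κ v x := by
  funext x
  exact integral_add (hu.integrable (κ x)) (hv.integrable (κ x))

lemma markovOp_sub {u v : E → ℝ} (hu : BM u) (hv : BM v) :
    markovOp κ (fun x => u x - v x) = fun x => markovOp κ u x - markovOp κ v x := by
  funext x
  exact integral_sub (hu.integrable (κ x)) (hv.integrable (κ x))

lemma compProd_swap
    (hrev : ∀ A B : Set E, MeasurableSet A → MeasurableSet B →
      ∫⁻ x in A, κ x B ∂π = ∫⁻ x in B, κ x A ∂π) :
    (π ⊗ₘ κ).map Prod.swap = π ⊗ₘ κ := by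
  haveI : IsProbabilityMeasure ((π ⊗ₘ κ).map Prod.swap) :=
    Measure.isProbabilityMeasure_map measurable_swap.aemeasurable
  refine ext_of_generate_finite _ generateFrom_prod.symm isPiSystem_prod ?_ (by simp)
  rintro _ ⟨A, hA, B, hB, rfl⟩
  simp only [Set.mem_setOf_eq] at hA hB
  rw [Measure.map_apply measurable_swap (hA.prod hB), Set.preimage_swap_prod,
    Measure.compProd_apply_prod hB hA, Measure.compProd_apply_prod hA hB, hrev B A hB hA]

lemma integrable_pair {u v : E → ℝ} (hu : BM u) (hv : BM v) :
    Integrable (fun p : E × E => u p.1 * v p.2) (π ⊗ₘ κ) :=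
  ((hu.comp measurable_fst).mul (hv.comp measurable_snd)).integrable _

lemma integral_pair {u v : E → ℝ} (hu : BM u) (hv : BM v) :
    ∫ p : E × E, u p.1 * v p.2 ∂(π ⊗ₘ κ) = ∫ x, u x * markovOp κ v x ∂π := by
  rw [Measure.integral_compProd (integrable_pair hu hv)]
  refine integral_congr_ae (ae_of_all _ fun x => ?_)
  exact integral_const_mul (u x) v

lemma integral_fst_sq {u : E → ℝ} (hu : BM u) :
    ∫ p : E × E, u p.1 * u p.1 ∂(π ⊗ₘ κ) = ∫ x, u x * u x ∂π := by
  rw [Measure.integral_compProd (((hu.mul hu).comp measurable_fst).integrable _)]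
  refine integral_congr_ae (ae_of_all _ fun x => ?_)
  simp

lemma integral_snd_sq
    (hrev : ∀ A B : Set E, MeasurableSet A → MeasurableSet B →
      ∫⁻ x in A, κ x B ∂π = ∫⁻ x in B, κ x A ∂π)
    {u : E → ℝ} (hu : BM u) :
    ∫ p : E × E, u p.2 * u p.2 ∂(π ⊗ₘ κ) = ∫ x, u x * u x ∂π := by
  conv_lhs => rw [← compProd_swap hrev]
  rw [integral_map measurable_swap.aemeasurable
    ((hu.mul hu).comp measurable_snd).meas.aestronglyMeasurable]
  exact integral_fst_sq hu

/-- Self-adjointness of the Markov operator. -/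
lemma ip_symm
    (hrev : ∀ A B : Set E, MeasurableSet A → MeasurableSet B →
      ∫⁻ x in A, κ x B ∂π = ∫⁻ x in B, κ x A ∂π)
    {u v : E → ℝ} (hu : BM u) (hv : BM v) :
    ∫ x, u x * markovOp κ v x ∂π = ∫ x, v x * markovOp κ u x ∂π := by
  rw [← integral_pair hu hv, ← integral_pair hv hu]
  conv_lhs => rw [← compProd_swap hrev]
  rw [integral_map measurable_swap.aemeasurable
    ((hu.comp measurable_fst).mul (hv.comp measurable_snd)).meas.aestronglyMeasurable]
  refine integral_congr_ae (ae_of_all _ fun p => ?_)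
  simp [mul_comm]

/-- `⟨u, P u⟩ ≤ ⟨u, u⟩`. -/
lemma dirichlet_le
    (hrev : ∀ A B : Set E, MeasurableSet A → MeasurableSet B →
      ∫⁻ x in A, κ x B ∂π = ∫⁻ x in B, κ x A ∂π)
    {u : E → ℝ} (hu : BM u) :
    ∫ x, u x * markovOp κ u x ∂π ≤ ∫ x, u x * u x ∂π := by
  have h1 : Integrable (fun p : E × E => u p.1 * u p.1) (π ⊗ₘ κ) :=
    ((hu.mul hu).comp measurable_fst).integrable _
  have h2 : Integrable (fun p : E × E => u p.2 * u p.2) (π ⊗ₘ κ) :=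
    ((hu.mul hu).comp measurable_snd).integrable _
  have h3 : Integrable (fun p : E × E => u p.1 * u p.2) (π ⊗ₘ κ) := integrable_pair hu hu
  have key : 0 ≤ ∫ p : E × E, (u p.1 - u p.2) * (u p.1 - u p.2) ∂(π ⊗ₘ κ) :=
    integral_nonneg fun p => mul_self_nonneg _
  have expand : ∫ p : E × E, (u p.1 - u p.2) * (u p.1 - u p.2) ∂(π ⊗ₘ κ)
      = (∫ p : E × E, u p.1 * u p.1 ∂(π ⊗ₘ κ)) + (∫ p : E × E, u p.2 * u p.2 ∂(π ⊗ₘ κ))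
        - 2 * ∫ p : E × E, u p.1 * u p.2 ∂(π ⊗ₘ κ) := by
    have h12 : Integrable (fun p : E × E => u p.1 * u p.1 + u p.2 * u p.2) (π ⊗ₘ κ) := h1.add h2
    have h32 : Integrable (fun p : E × E => 2 * (u p.1 * u p.2)) (π ⊗ₘ κ) := h3.const_mul 2
    have e1 : ∫ p : E × E, (u p.1 - u p.2) * (u p.1 - u p.2) ∂(π ⊗ₘ κ)
        = ∫ p : E × E, (u p.1 * u p.1 + u p.2 * u p.2) - 2 * (u p.1 * u p.2) ∂(π ⊗ₘ κ) := by
      refine integral_congr_ae (ae_of_all _ fun p => ?_); ring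
    rw [e1, integral_sub h12 h32, integral_add h1 h2, integral_const_mul]
  rw [expand, integral_fst_sq hu, integral_snd_sq hrev hu, integral_pair hu hu] at key
  linarith

/-- `-⟨u, u⟩ ≤ ⟨u, P u⟩`. -/
lemma dirichlet_ge
    (hrev : ∀ A B : Set E, MeasurableSet A → MeasurableSet B →
      ∫⁻ x in A, κ x B ∂π = ∫⁻ x in B, κ x A ∂π)
    {u : E → ℝ} (hu : BM u) :
    -(∫ x, u x * u x ∂π) ≤ ∫ x, u x * markovOp κ u x ∂π := by
  have h1 : Integrable (fun p : E × E => u p.1 * u p.1) (π ⊗ₘ κ) :=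
    ((hu.mul hu).comp measurable_fst).integrable _
  have h2 : Integrable (fun p : E × E => u p.2 * u p.2) (π ⊗ₘ κ) :=
    ((hu.mul hu).comp measurable_snd).integrable _
  have h3 : Integrable (fun p : E × E => u p.1 * u p.2) (π ⊗ₘ κ) := integrable_pair hu hu
  have key : 0 ≤ ∫ p : E × E, (u p.1 + u p.2) * (u p.1 + u p.2) ∂(π ⊗ₘ κ) :=
    integral_nonneg fun p => mul_self_nonneg _
  have expand : ∫ p : E × E, (u p.1 + u p.2) * (u p.1 + u p.2) ∂(π ⊗ₘ κ)
      = (∫ p : E × E, u p.1 * u p.1 ∂(π ⊗ₘ κ)) + (∫ p : E × E, u p.2 * u p.2 ∂(π ⊗ₘ κ))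
        + 2 * ∫ p : E × E, u p.1 * u p.2 ∂(π ⊗ₘ κ) := by
    have h12 : Integrable (fun p : E × E => u p.1 * u p.1 + u p.2 * u p.2) (π ⊗ₘ κ) := h1.add h2
    have h32 : Integrable (fun p : E × E => 2 * (u p.1 * u p.2)) (π ⊗ₘ κ) := h3.const_mul 2
    have e1 : ∫ p : E × E, (u p.1 + u p.2) * (u p.1 + u p.2) ∂(π ⊗ₘ κ)
        = ∫ p : E × E, (u p.1 * u p.1 + u p.2 * u p.2) + 2 * (u p.1 * u p.2) ∂(π ⊗ₘ κ) := by
      refine integral_congr_ae (ae_of_all _ fun p => ?_); ring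
    rw [e1, integral_add h12 h32, integral_add h1 h2, integral_const_mul]
  rw [expand, integral_fst_sq hu, integral_snd_sq hrev hu, integral_pair hu hu] at key
  linarith

/-- Self-adjointness for iterates. -/
lemma ip_iter
    (hrev : ∀ A B : Set E, MeasurableSet A → MeasurableSet B →
      ∫⁻ x in A, κ x B ∂π = ∫⁻ x in B, κ x A ∂π) :
    ∀ (n : ℕ) (u v : E → ℝ), BM u → BM v →
      ∫ x, ((markovOp κ)^[n] u) x * v x ∂π = ∫ x, u x * ((markovOp κ)^[n] v) x ∂π := by
  intro n
  induction n with
  | zero => intro u v _ _; simp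
  | succ n ih =>
    intro u v hu hv
    have h1 : ((markovOp κ)^[n + 1] u) = (markovOp κ)^[n] (markovOp κ u) :=
      Function.iterate_succ_apply (markovOp κ) n u
    have h2 : ((markovOp κ)^[n + 1] v) = markovOp κ ((markovOp κ)^[n] v) :=
      Function.iterate_succ_apply' (markovOp κ) n v
    rw [h1, ih (markovOp κ u) v hu.markov hv, h2]
    calc ∫ x, markovOp κ u x * ((markovOp κ)^[n] v) x ∂π
        = ∫ x, ((markovOp κ)^[n] v) x * markovOp κ u x ∂π := by
          refine integral_congr_ae (ae_of_all _ fun x => ?_); ring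
      _ = ∫ x, u x * markovOp κ ((markovOp κ)^[n] v) x ∂π :=
          ip_symm hrev (hv.iterMarkovOp n) hu

end GeyerAux

open GeyerAux in
/-- Geyer's theorem (non-strict form): for a Markov kernel `κ` reversible with respect to
a probability measure `π` (detailed balance) and a bounded measurable `g` with
`∫ g dπ = 0`, the sums of adjacent pairs of autocovariances
`Γ_m = γ_{2m} + γ_{2m+1}`, where `γ_t = ∫ g · P^t g dπ`, form a nonnegative,
nonincreasing, convex sequence. -/
theorem geyer_initial_sequence {E : Type*} [MeasurableSpace E]
    (π : Measure E) [IsProbabilityMeasure π]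
    (κ : ProbabilityTheory.Kernel E E) [ProbabilityTheory.IsMarkovKernel κ]
    (hrev : ∀ A B : Set E, MeasurableSet A → MeasurableSet B →
      ∫⁻ x in A, κ x B ∂π = ∫⁻ x in B, κ x A ∂π)
    (g : E → ℝ) (hg : Measurable g) (C : ℝ) (hgb : ∀ x, |g x| ≤ C)
    (hg0 : (∫ x, g x ∂π) = 0)
    (γ : ℕ → ℝ) (hγ : ∀ t : ℕ, γ t = ∫ x, g x * ((markovOp κ)^[t] g) x ∂π)
    (Γ : ℕ → ℝ) (hΓ : ∀ m : ℕ, Γ m = γ (2 * m) + γ (2 * m + 1)) :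
    ∀ m : ℕ, 0 ≤ Γ m ∧ Γ (m + 1) ≤ Γ m ∧ 2 * Γ (m + 1) ≤ Γ m + Γ (m + 2) := by
  intro m
  set f : ℕ → E → ℝ := fun k => (markovOp κ)^[k] g with hf
  have hbg : BM g := ⟨hg, ⟨C, hgb⟩⟩
  have hbf : ∀ k, BM (f k) := fun k => hbg.iterMarkovOp k
  -- P (f k) = f (k+1)
  have hPf : ∀ k, markovOp κ (f k) = f (k + 1) := fun k =>
    (Function.iterate_succ_apply' (markovOp κ) k g).symm
  -- the main inner product identity
  have hip : ∀ a b : ℕ, ∫ x, f a x * f b x ∂π = γ (a + b) := by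
    intro a b
    rw [hγ (a + b), Function.iterate_add_apply]
    exact ip_iter hrev a g (f b) hbg (hbf b)
  -- expansion of products of sums
  have E2 : ∀ a b c d : ℕ,
      ∫ x, (f a x + f b x) * (f c x + f d x) ∂π = γ (a + c) + γ (a + d) + γ (b + c) + γ (b + d) := by
    intro a b c d
    have hint : ∀ i j : ℕ, Integrable (fun x => f i x * f j x) π :=
      fun i j => ((hbf i).mul (hbf j)).integrable π
    have : ∫ x, (f a x + f b x) * (f c x + f d x) ∂π
        = ∫ x, (f a x * f c x + f a x * f d x) + (f b x * f c x + f b x * f d x) ∂π := by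
      refine integral_congr_ae (ae_of_all _ fun x => ?_); ring
    have hl : Integrable (fun x => f a x * f c x + f a x * f d x) π := (hint a c).add (hint a d)
    have hr : Integrable (fun x => f b x * f c x + f b x * f d x) π := (hint b c).add (hint b d)
    rw [this, integral_add hl hr, integral_add (hint a c) (hint a d),
      integral_add (hint b c) (hint b d), hip a c, hip a d, hip b c, hip b d]
    ring
  -- expansion of products of differences of sums
  have E3 : ∀ a b c d a' b' c' d' : ℕ,
      ∫ x, ((f a x + f b x) - (f c x + f d x)) * ((f a' x + f b' x) - (f c' x + f d' x)) ∂π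
      = (γ (a + a') + γ (a + b') + γ (b + a') + γ (b + b'))
        - (γ (a + c') + γ (a + d') + γ (b + c') + γ (b + d'))
        - (γ (c + a') + γ (c + b') + γ (d + a') + γ (d + b'))
        + (γ (c + c') + γ (c + d') + γ (d + c') + γ (d + d')) := by
    intro a b c d a' b' c' d'
    have hS : ∀ i j : ℕ, BM (fun x => f i x + f j x) := fun i j => (hbf i).add (hbf j)
    have hint : ∀ i j i' j' : ℕ,
        Integrable (fun x => (f i x + f j x) * (f i' x + f j' x)) π :=
      fun i j i' j' => ((hS i j).mul (hS i' j')).integrable π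
    have : ∫ x, ((f a x + f b x) - (f c x + f d x)) * ((f a' x + f b' x) - (f c' x + f d' x)) ∂π
        = ∫ x, ((f a x + f b x) * (f a' x + f b' x) - (f a x + f b x) * (f c' x + f d' x))
            - ((f c x + f d x) * (f a' x + f b' x) - (f c x + f d x) * (f c' x + f d' x)) ∂π := by
      refine integral_congr_ae (ae_of_all _ fun x => ?_); ring
    have hl : Integrable
        (fun x => (f a x + f b x) * (f a' x + f b' x) - (f a x + f b x) * (f c' x + f d' x)) π :=
      (hint a b a' b').sub (hint a b c' d')
    have hr : Integrable
        (fun x => (f c x + f d x) * (f a' x + f b' x) - (f c x + f d x) * (f c' x + f d' x)) π :=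
      (hint c d a' b').sub (hint c d c' d')
    rw [this, integral_sub hl hr,
      integral_sub (hint a b a' b') (hint a b c' d'),
      integral_sub (hint c d a' b') (hint c d c' d'),
      E2 a b a' b', E2 a b c' d', E2 c d a' b', E2 c d c' d']
    ring
  -- Part 1 : 0 ≤ Γ m
  have part1 : 0 ≤ Γ m := by
    have h := dirichlet_ge hrev (hbf m)
    rw [hPf m, hip m m, hip m (m + 1)] at h
    have e0 : m + m = 2 * m := by ring
    have e1 : m + (m + 1) = 2 * m + 1 := by ring
    rw [e0, e1] at h
    rw [hΓ m]
    linarith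
  -- Part 2 : Γ (m+1) ≤ Γ m
  have part2 : Γ (m + 1) ≤ Γ m := by
    set u : E → ℝ := fun x => f m x + f (m + 1) x with hu
    have hbu : BM u := (hbf m).add (hbf (m + 1))
    have hPu : markovOp κ u = fun x => f (m + 1) x + f (m + 2) x := by
      rw [hu, markovOp_add (hbf m) (hbf (m + 1)), hPf m, hPf (m + 1)]
    have h := dirichlet_le hrev hbu
    rw [hPu] at h
    have lhs : ∫ x, u x * (f (m + 1) x + f (m + 2) x) ∂π
        = γ (m + (m + 1)) + γ (m + (m + 2)) + γ ((m + 1) + (m + 1)) + γ ((m + 1) + (m + 2)) :=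
      E2 m (m + 1) (m + 1) (m + 2)
    have rhs : ∫ x, u x * u x ∂π
        = γ (m + m) + γ (m + (m + 1)) + γ ((m + 1) + m) + γ ((m + 1) + (m + 1)) :=
      E2 m (m + 1) m (m + 1)
    rw [lhs, rhs] at h
    have e0 : m + m = 2 * m := by ring
    have e1 : m + (m + 1) = 2 * m + 1 := by ring
    have e1' : (m + 1) + m = 2 * m + 1 := by ring
    have e2 : m + (m + 2) = 2 * m + 2 := by ring
    have e2' : (m + 1) + (m + 1) = 2 * m + 2 := by ring
    have e3 : (m + 1) + (m + 2) = 2 * m + 3 := by ring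
    rw [e0, e1, e1', e2, e2', e3] at h
    have g1 : Γ m = γ (2 * m) + γ (2 * m + 1) := hΓ m
    have g2 : Γ (m + 1) = γ (2 * m + 2) + γ (2 * m + 3) := by
      have := hΓ (m + 1)
      have a1 : 2 * (m + 1) = 2 * m + 2 := by ring
      have a2 : 2 * (m + 1) + 1 = 2 * m + 3 := by ring
      rw [a2, a1] at this
      exact this
    linarith
  -- Part 3 : convexity
  have part3 : 2 * Γ (m + 1) ≤ Γ m + Γ (m + 2) := by
    set v : E → ℝ := fun x => (f m x + f (m + 1) x) - (f (m + 1) x + f (m + 2) x) with hv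
    have hS : ∀ i j : ℕ, BM (fun x => f i x + f j x) := fun i j => (hbf i).add (hbf j)
    have hbv : BM v := (hS m (m + 1)).sub (hS (m + 1) (m + 2))
    have hPv : markovOp κ v
        = fun x => (f (m + 1) x + f (m + 2) x) - (f (m + 2) x + f (m + 3) x) := by
      rw [hv, markovOp_sub (hS m (m + 1)) (hS (m + 1) (m + 2)),
        markovOp_add (hbf m) (hbf (m + 1)), markovOp_add (hbf (m + 1)) (hbf (m + 2)),
        hPf m, hPf (m + 1), hPf (m + 2)]
    have h := dirichlet_ge hrev hbv
    rw [hPv] at h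
    have lhs : ∫ x, v x * ((f (m + 1) x + f (m + 2) x) - (f (m + 2) x + f (m + 3) x)) ∂π
        = (γ (m + (m + 1)) + γ (m + (m + 2)) + γ ((m + 1) + (m + 1)) + γ ((m + 1) + (m + 2)))
          - (γ (m + (m + 2)) + γ (m + (m + 3)) + γ ((m + 1) + (m + 2)) + γ ((m + 1) + (m + 3)))
          - (γ ((m + 1) + (m + 1)) + γ ((m + 1) + (m + 2)) + γ ((m + 2) + (m + 1))
              + γ ((m + 2) + (m + 2)))
          + (γ ((m + 1) + (m + 2)) + γ ((m + 1) + (m + 3)) + γ ((m + 2) + (m + 2))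
              + γ ((m + 2) + (m + 3))) :=
      E3 m (m + 1) (m + 1) (m + 2) (m + 1) (m + 2) (m + 2) (m + 3)
    have rhs : ∫ x, v x * v x ∂π
        = (γ (m + m) + γ (m + (m + 1)) + γ ((m + 1) + m) + γ ((m + 1) + (m + 1)))
          - (γ (m + (m + 1)) + γ (m + (m + 2)) + γ ((m + 1) + (m + 1)) + γ ((m + 1) + (m + 2)))
          - (γ ((m + 1) + m) + γ ((m + 1) + (m + 1)) + γ ((m + 2) + m) + γ ((m + 2) + (m + 1)))
          + (γ ((m + 1) + (m + 1)) + γ ((m + 1) + (m + 2)) + γ ((m + 2) + (m + 1))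
              + γ ((m + 2) + (m + 2))) :=
      E3 m (m + 1) (m + 1) (m + 2) m (m + 1) (m + 1) (m + 2)
    rw [lhs, rhs] at h
    have e0 : m + m = 2 * m := by ring
    have e1 : m + (m + 1) = 2 * m + 1 := by ring
    have e1' : (m + 1) + m = 2 * m + 1 := by ring
    have e2 : m + (m + 2) = 2 * m + 2 := by ring
    have e2' : (m + 1) + (m + 1) = 2 * m + 2 := by ring
    have e3 : m + (m + 3) = 2 * m + 3 := by ring
    have e3' : (m + 1) + (m + 2) = 2 * m + 3 := by ring
    have e3'' : (m + 2) + (m + 1) = 2 * m + 3 := by ring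
    have e4 : (m + 1) + (m + 3) = 2 * m + 4 := by ring
    have e4' : (m + 2) + (m + 2) = 2 * m + 4 := by ring
    have e5 : (m + 2) + (m + 3) = 2 * m + 5 := by ring
    have e2'' : (m + 2) + m = 2 * m + 2 := by ring
    rw [e0, e1, e1', e2, e2', e3, e3', e3'', e4, e4', e5, e2''] at h
    have g1 : Γ m = γ (2 * m) + γ (2 * m + 1) := hΓ m
    have g2 : Γ (m + 1) = γ (2 * m + 2) + γ (2 * m + 3) := by
      have := hΓ (m + 1)
      have a1 : 2 * (m + 1) = 2 * m + 2 := by ring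
      have a2 : 2 * (m + 1) + 1 = 2 * m + 3 := by ring
      rw [a2, a1] at this
      exact this
    have g3 : Γ (m + 2) = γ (2 * m + 4) + γ (2 * m + 5) := by
      have := hΓ (m + 2)
      have a1 : 2 * (m + 2) = 2 * m + 4 := by ring
      have a2 : 2 * (m + 2) + 1 = 2 * m + 5 := by ring
      rw [a2, a1] at this
      exact this
    linarith
  exact ⟨part1, part2, part3⟩
end
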